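/- arXiv:2602.05795 — 4 statements merged into one kernel-verified Lean document; each statement's English description precedes it below -/
import Mathlib

section
/- For any g ∈ U(m,1), identified with an automorphism of the unit ball B^m ⊂ ℂ^m via z ↦ (Az + b)/(cᵀz + d), one has ‖g(0)‖ = (σ₁(g)² − 1)/(σ₁(g)² + 1), where σ₁(g) denotes the largest singular value of g. -/
/-!
Write `g = ((A, b), (cᵀ, d))` and `J = diag(1, …, 1, -1)`. The entries at the corner of
`gᴴ J g = J` and of its consequence `g J gᴴ = J` give `‖b‖² = ‖c‖² = |d|² - 1`; with `t = ‖c‖`,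
`s = |d|` this makes `‖g(0)‖ = ‖b‖ / |d| = t / s`. The form identity
`‖g v‖² = ‖v‖² - 2 |v_{m+1}|² + 2 |(g v)_{m+1}|²`, together with Cauchy–Schwarz for
`(g v)_{m+1} = c ⬝ v' + d v_{m+1}`, shows `σ₁(g) = t + s`, attained at `v = (c̄ / t, d̄ / s)`.
Finally `((t + s)² - 1) / ((t + s)² + 1) = t / s` because `s² = 1 + t²`.
-/

open Matrix

noncomputable section

/-- `g ∈ U(m,1)`: the matrix `g` preserves the indefinite Hermitian form
`[v,w] = v₁ w̄₁ + ⋯ + v_m w̄_m − v_{m+1} w̄_{m+1}` on `ℂ^{m+1}`. -/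
def InUmm1 {m : ℕ} (g : Matrix (Fin (m+1)) (Fin (m+1)) ℂ) : Prop :=
  ∀ v w : Fin (m+1) → ℂ,
    (∑ i : Fin m, g.mulVec v i.castSucc * star (g.mulVec w i.castSucc))
      - g.mulVec v (Fin.last m) * star (g.mulVec w (Fin.last m)) =
    (∑ i : Fin m, v i.castSucc * star (w i.castSucc)) - v (Fin.last m) * star (w (Fin.last m))

/-- The fractional linear action of `g = ((A,b),(cᵀ,d))` on `ℂ^m`:
`z ↦ (Az + b)/(cᵀz + d)`. -/
def matAction {m : ℕ} (g : Matrix (Fin (m+1)) (Fin (m+1)) ℂ)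
    (z : EuclideanSpace ℂ (Fin m)) : EuclideanSpace ℂ (Fin m) :=
  WithLp.toLp 2 (fun i : Fin m => (∑ j : Fin m, g i.castSucc j.castSucc * z j + g i.castSucc (Fin.last m)) /
    (∑ j : Fin m, g (Fin.last m) j.castSucc * z j + g (Fin.last m) (Fin.last m)))

/-- `σ₁(g)`: the largest singular value of `g`, i.e. its operator norm as a linear map
on Euclidean space. -/
def sigma1 {m : ℕ} (g : Matrix (Fin (m+1)) (Fin (m+1)) ℂ) : ℝ :=
  ‖LinearMap.toContinuousLinearMap (Matrix.toEuclideanLin g)‖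

namespace EuclideanSpace

variable {𝕜 : Type*} [RCLike 𝕜] {m : ℕ}

def init (v : EuclideanSpace 𝕜 (Fin (m+1))) : EuclideanSpace 𝕜 (Fin m) :=
  WithLp.toLp 2 fun j => v j.castSucc

lemma norm_sq_eq_norm_init_sq_add (v : EuclideanSpace 𝕜 (Fin (m+1))) :
    ‖v‖ ^ 2 = ‖init v‖ ^ 2 + ‖v (Fin.last m)‖ ^ 2 := by
  simp [norm_sq_eq, init, Fin.sum_univ_castSucc]

lemma norm_sum_mul_le {ι : Type*} [Fintype ι] (x y : EuclideanSpace 𝕜 ι) :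
    ‖∑ i, x i * y i‖ ≤ ‖x‖ * ‖y‖ := by
  rw [norm_eq, norm_eq]
  refine (norm_sum_le _ _).trans ?_
  simp_rw [norm_mul]
  exact Real.sum_mul_le_sqrt_mul_sqrt _ _ _

end EuclideanSpace

namespace Matrix

variable {m : ℕ}

def lorentzJ (m : ℕ) : Matrix (Fin (m+1)) (Fin (m+1)) ℂ :=
  diagonal (Fin.snoc (fun _ => 1) (-1))

lemma lorentzJ_mul_self : lorentzJ m * lorentzJ m = 1 := by
  rw [lorentzJ, diagonal_mul_diagonal, ← diagonal_one]
  congr 1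
  ext i
  cases i using Fin.lastCases <;> simp

lemma sum_castSucc_sub_last_eq_lorentzJ_mulVec_dotProduct (x y : Fin (m+1) → ℂ) :
    (∑ i : Fin m, x i.castSucc * star (y i.castSucc)) - x (Fin.last m) * star (y (Fin.last m)) =
      (lorentzJ m *ᵥ x) ⬝ᵥ star y := by
  simp [lorentzJ, dotProduct, Fin.sum_univ_castSucc, mulVec_diagonal, sub_eq_add_neg]

lemma mul_mul_conjTranspose_eq_of_conjTranspose_mul_mul_eq {n R : Type*} [Fintype n]
    [DecidableEq n] [CommRing R] [StarRing R] {J g : Matrix n n R} (hJ : J * J = 1)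
    (h : gᴴ * J * g = J) : g * J * gᴴ = J := by
  have hinv : g * (J * gᴴ * J) = 1 := mul_eq_one_comm.mp <| by
    rw [Matrix.mul_assoc, Matrix.mul_assoc, ← Matrix.mul_assoc gᴴ, h, hJ]
  calc g * J * gᴴ = g * (J * gᴴ * J) * J := by simp only [Matrix.mul_assoc, hJ, Matrix.mul_one]
    _ = J := by rw [hinv, Matrix.one_mul]

lemma sum_norm_sq_castSucc_eq_of_mul_lorentzJ_mul_conjTranspose
    {A : Matrix (Fin (m+1)) (Fin (m+1)) ℂ} (hA : A * lorentzJ m * Aᴴ = lorentzJ m) :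
    ∑ k : Fin m, ‖A (Fin.last m) k.castSucc‖ ^ 2 = ‖A (Fin.last m) (Fin.last m)‖ ^ 2 - 1 := by
  have h := congr_fun₂ hA (Fin.last m) (Fin.last m)
  rw [lorentzJ, mul_apply, Fin.sum_univ_castSucc] at h
  simp only [mul_diagonal, conjTranspose_apply, Fin.snoc_castSucc, Fin.snoc_last, mul_one,
    mul_neg_one, diagonal_apply_eq, RCLike.star_def, Complex.mul_conj', neg_mul,
    ← sub_eq_add_neg] at h
  have h' : ∑ k : Fin m, ‖A (Fin.last m) k.castSucc‖ ^ 2 - ‖A (Fin.last m) (Fin.last m)‖ ^ 2 =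
      -1 := by
    exact_mod_cast h
  linarith

variable {𝕜 : Type*} [RCLike 𝕜]

def topRight (g : Matrix (Fin (m+1)) (Fin (m+1)) 𝕜) : EuclideanSpace 𝕜 (Fin m) :=
  WithLp.toLp 2 fun i => g i.castSucc (Fin.last m)

def bottomLeft (g : Matrix (Fin (m+1)) (Fin (m+1)) 𝕜) : EuclideanSpace 𝕜 (Fin m) :=
  WithLp.toLp 2 fun j => g (Fin.last m) j.castSucc

lemma toEuclideanLin_apply_last (g : Matrix (Fin (m+1)) (Fin (m+1)) 𝕜)
    (v : EuclideanSpace 𝕜 (Fin (m+1))) :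
    toEuclideanLin g v (Fin.last m) =
      ∑ j, g.bottomLeft j * EuclideanSpace.init v j +
        g (Fin.last m) (Fin.last m) * v (Fin.last m) := by
  simp [mulVec, dotProduct, Fin.sum_univ_castSucc, bottomLeft, EuclideanSpace.init]

lemma norm_toEuclideanLin_apply_last_le (g : Matrix (Fin (m+1)) (Fin (m+1)) 𝕜)
    (v : EuclideanSpace 𝕜 (Fin (m+1))) :
    ‖toEuclideanLin g v (Fin.last m)‖ ≤
      ‖g.bottomLeft‖ * ‖EuclideanSpace.init v‖ +
        ‖g (Fin.last m) (Fin.last m)‖ * ‖v (Fin.last m)‖ := by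
  rw [toEuclideanLin_apply_last]
  refine (norm_add_le _ _).trans ?_
  rw [norm_mul]
  exact add_le_add_left (EuclideanSpace.norm_sum_mul_le _ _) _

end Matrix

lemma matAction_zero {m : ℕ} (g : Matrix (Fin (m+1)) (Fin (m+1)) ℂ) :
    matAction g 0 = (g (Fin.last m) (Fin.last m))⁻¹ • g.topRight := by
  ext i
  simp [matAction, topRight, div_eq_inv_mul]

namespace InUmm1

variable {m : ℕ} {g : Matrix (Fin (m+1)) (Fin (m+1)) ℂ}

theorem conjTranspose_mul_lorentzJ_mul (hg : InUmm1 g) : gᴴ * lorentzJ m * g = lorentzJ m := by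
  ext i j
  have h := hg (Pi.single j 1) (Pi.single i 1)
  simp only [sum_castSucc_sub_last_eq_lorentzJ_mulVec_dotProduct, mulVec_mulVec,
    star_mulVec] at h
  rw [dotProduct_comm, ← dotProduct_comm (star _), ← dotProduct_mulVec, mulVec_mulVec] at h
  simpa [Matrix.mul_assoc, mulVec_single_one, single_one_dotProduct] using h

theorem norm_bottomLeft_sq (hg : InUmm1 g) :
    ‖g.bottomLeft‖ ^ 2 = ‖g (Fin.last m) (Fin.last m)‖ ^ 2 - 1 :=
  (EuclideanSpace.norm_sq_eq _).trans <| sum_norm_sq_castSucc_eq_of_mul_lorentzJ_mul_conjTranspose <|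
    mul_mul_conjTranspose_eq_of_conjTranspose_mul_mul_eq lorentzJ_mul_self
      hg.conjTranspose_mul_lorentzJ_mul

theorem norm_topRight_sq (hg : InUmm1 g) :
    ‖g.topRight‖ ^ 2 = ‖g (Fin.last m) (Fin.last m)‖ ^ 2 - 1 := by
  have h := sum_norm_sq_castSucc_eq_of_mul_lorentzJ_mul_conjTranspose (A := gᴴ)
    (by rw [conjTranspose_conjTranspose]; exact hg.conjTranspose_mul_lorentzJ_mul)
  simpa [EuclideanSpace.norm_sq_eq, topRight] using h

theorem norm_topRight_eq_norm_bottomLeft (hg : InUmm1 g) : ‖g.topRight‖ = ‖g.bottomLeft‖ := by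
  rw [← sq_eq_sq₀ (norm_nonneg _) (norm_nonneg _), hg.norm_topRight_sq, hg.norm_bottomLeft_sq]

theorem one_le_norm_apply_last_last (hg : InUmm1 g) : 1 ≤ ‖g (Fin.last m) (Fin.last m)‖ := by
  have h := hg.norm_bottomLeft_sq
  nlinarith [sq_nonneg ‖g.bottomLeft‖, norm_nonneg (g (Fin.last m) (Fin.last m))]

theorem norm_toEuclideanLin_sq (hg : InUmm1 g) (v : EuclideanSpace ℂ (Fin (m+1))) :
    ‖toEuclideanLin g v‖ ^ 2 =
      ‖v‖ ^ 2 - 2 * ‖v (Fin.last m)‖ ^ 2 + 2 * ‖toEuclideanLin g v (Fin.last m)‖ ^ 2 := by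
  have h := hg v v
  simp only [RCLike.star_def, Complex.mul_conj, ← Complex.sq_norm] at h
  have h' : ∑ i : Fin m, ‖toEuclideanLin g v i.castSucc‖ ^ 2 -
      ‖toEuclideanLin g v (Fin.last m)‖ ^ 2 =
      ∑ i : Fin m, ‖v i.castSucc‖ ^ 2 - ‖v (Fin.last m)‖ ^ 2 := by
    exact_mod_cast h
  simp only [EuclideanSpace.norm_sq_eq, Fin.sum_univ_castSucc]
  linarith

theorem sigma1_le (hg : InUmm1 g) :
    sigma1 g ≤ ‖g.bottomLeft‖ + ‖g (Fin.last m) (Fin.last m)‖ := by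
  set t := ‖g.bottomLeft‖
  set s := ‖g (Fin.last m) (Fin.last m)‖
  have hst : s ^ 2 = 1 + t ^ 2 := by linarith [hg.norm_bottomLeft_sq]
  have ht : 0 ≤ t := norm_nonneg _
  have hs : 0 ≤ s := norm_nonneg _
  refine ContinuousLinearMap.opNorm_le_bound _ (by positivity) fun v => ?_
  set l := ‖EuclideanSpace.init v‖
  set u := ‖v (Fin.last m)‖
  have hv := EuclideanSpace.norm_sq_eq_norm_init_sq_add v
  have hlast := g.norm_toEuclideanLin_apply_last_le v
  have key : ‖toEuclideanLin g v‖ ^ 2 ≤ ((t + s) * ‖v‖) ^ 2 := calc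
    ‖toEuclideanLin g v‖ ^ 2 = l ^ 2 - u ^ 2 + 2 * ‖toEuclideanLin g v (Fin.last m)‖ ^ 2 := by
      rw [hg.norm_toEuclideanLin_sq, hv]; ring
    _ ≤ l ^ 2 - u ^ 2 + 2 * (t * l + s * u) ^ 2 := by gcongr
    _ = (t + s) ^ 2 * (l ^ 2 + u ^ 2) - 2 * t * s * (l - u) ^ 2 := by
      linear_combination (2 * u ^ 2 - l ^ 2 - u ^ 2) * hst
    _ ≤ ((t + s) * ‖v‖) ^ 2 := by
      rw [mul_pow, hv]
      nlinarith [mul_nonneg (mul_nonneg ht hs) (sq_nonneg (l - u))]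
  exact (pow_le_pow_iff_left₀ (norm_nonneg _) (by positivity) two_ne_zero).mp key

theorem le_sigma1 (hg : InUmm1 g) :
    ‖g.bottomLeft‖ + ‖g (Fin.last m) (Fin.last m)‖ ≤ sigma1 g := by
  set t := ‖g.bottomLeft‖
  set s := ‖g (Fin.last m) (Fin.last m)‖
  have hst : s ^ 2 = 1 + t ^ 2 := by linarith [hg.norm_bottomLeft_sq]
  have hs : 1 ≤ s := hg.one_le_norm_apply_last_last
  have ht : 0 ≤ t := norm_nonneg _
  -- At `t = 0` the first block is `c̄ / 0 = 0`, and `(0, d̄ / s)` is still extremal.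
  let v : EuclideanSpace ℂ (Fin (m+1)) := WithLp.toLp 2 <|
    Fin.snoc (fun j => star (g.bottomLeft j) / t) (star (g (Fin.last m) (Fin.last m)) / s)
  have hinit : ‖EuclideanSpace.init v‖ ^ 2 = t ^ 2 / t ^ 2 := by
    simp only [v, EuclideanSpace.init, EuclideanSpace.norm_sq_eq, Fin.snoc_castSucc,
      RCLike.star_def, Complex.norm_div, RCLike.norm_conj, Complex.norm_real, Real.norm_eq_abs,
      div_pow, sq_abs, ← Finset.sum_div]
    rw [← EuclideanSpace.norm_sq_eq]
  have hlast : ‖v (Fin.last m)‖ = 1 := by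
    have hd : g (Fin.last m) (Fin.last m) ≠ 0 := norm_ne_zero_iff.mp (by positivity)
    simp [v, s, hd]
  have hgv : toEuclideanLin g v (Fin.last m) = ((t + s : ℝ) : ℂ) := by
    have hsum : ∑ j, (‖g.bottomLeft j‖ ^ 2 : ℂ) = (t : ℂ) ^ 2 := by
      exact_mod_cast (EuclideanSpace.norm_sq_eq _).symm
    rw [toEuclideanLin_apply_last]
    simp only [v, EuclideanSpace.init, Fin.snoc_castSucc, Fin.snoc_last, mul_div_assoc',
      RCLike.star_def, Complex.mul_conj', ← Finset.sum_div, hsum]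
    push_cast
    rw [pow_two, pow_two, mul_self_div_self, mul_self_div_self]
  have hv : ‖v‖ ^ 2 = t ^ 2 / t ^ 2 + 1 := by
    rw [EuclideanSpace.norm_sq_eq_norm_init_sq_add, hinit, hlast, one_pow]
  have key : ((t + s) * ‖v‖) ^ 2 ≤ ‖toEuclideanLin g v‖ ^ 2 := by
    rw [hg.norm_toEuclideanLin_sq, hgv, hlast, mul_pow, hv, Complex.norm_real,
      Real.norm_of_nonneg (by positivity)]
    have : 1 ≤ (t + s) ^ 2 := by nlinarith
    nlinarith [mul_nonneg (sub_nonneg.mpr (div_self_le_one (t ^ 2))) (sub_nonneg.mpr this)]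
  have hsig := ((pow_le_pow_iff_left₀ (by positivity) (norm_nonneg _) two_ne_zero).mp key).trans
    ((LinearMap.toContinuousLinearMap (toEuclideanLin g)).le_opNorm v)
  exact le_of_mul_le_mul_right hsig (norm_pos_iff.mpr fun h => by simp [h] at hlast)

theorem sigma1_eq (hg : InUmm1 g) :
    sigma1 g = ‖g.bottomLeft‖ + ‖g (Fin.last m) (Fin.last m)‖ :=
  le_antisymm hg.sigma1_le hg.le_sigma1

end InUmm1

/-- For `g ∈ U(m,1)` acting on the ball by fractional linear
transformations, `‖g(0)‖ = (σ₁(g)² − 1)/(σ₁(g)² + 1)`. -/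
theorem stmt4 {m : ℕ} (g : Matrix (Fin (m+1)) (Fin (m+1)) ℂ) (hg : InUmm1 g) :
    ‖matAction g 0‖ = (sigma1 g ^ 2 - 1) / (sigma1 g ^ 2 + 1) := by
  have hst := hg.norm_bottomLeft_sq
  have hs := hg.one_le_norm_apply_last_last
  rw [matAction_zero, norm_smul, norm_inv, hg.norm_topRight_eq_norm_bottomLeft, hg.sigma1_eq]
  set t := ‖g.bottomLeft‖
  set s := ‖g (Fin.last m) (Fin.last m)‖
  rw [inv_mul_eq_div, div_eq_div_iff (by positivity) (by positivity)]
  linear_combination (t + s) * hst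
end
end

section
/- Let g ∈ U(m,1) act on the ball B^m by fractional linear transformations and let λ₁(g) denote the spectral radius of g (largest absolute value of eigenvalues). Then lim_{n→∞} (1/n) log(1 − ‖gⁿ(0)‖) = −2 log λ₁(g). -/
/-!
For `M ∈ U(m,1)` with lower-right entry `d`, the invariance of the form on the basis vectors
says that every column of `M`, and every row (as `Mᴴ ∈ U(m,1)`), has form-norm `±1`. This gives
`‖M(0)‖² = 1 - |d|⁻²` and `‖M‖_F² = 4|d|² + m - 3`. Hence `1 - ‖gⁿ(0)‖` lies between `|dₙ|⁻²/2`
and `|dₙ|⁻²`, while `|dₙ|²` is comparable to `‖gⁿ‖_F²`, so by Gelfand's formula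
`(1/n) log (1 - ‖gⁿ(0)‖)` has the same limit as `-(2/n) log ‖gⁿ‖_F`, namely `-2 log λ₁(g)`.
-/

open Matrix Filter

noncomputable section

open Topology

theorem tendsto_inv_mul_log_of_le_of_le {a b : ℕ → ℝ} {c C L : ℝ} (hc : 0 < c)
    (ha : ∀ n, 0 < a n) (hca : ∀ n, c * a n ≤ b n) (hbC : ∀ n, b n ≤ C * a n)
    (h : Tendsto (fun n : ℕ => 1 / (n : ℝ) * Real.log (a n)) atTop (𝓝 L)) :
    Tendsto (fun n : ℕ => 1 / (n : ℝ) * Real.log (b n)) atTop (𝓝 L) := by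
  have hb n : 0 < b n := (mul_pos hc (ha n)).trans_le (hca n)
  have hC : 0 < C := pos_of_mul_pos_left ((hb 0).trans_le (hbC 0)) (ha 0).le
  have hscale : ∀ k : ℝ, 0 < k →
      Tendsto (fun n : ℕ => 1 / (n : ℝ) * Real.log (k * a n)) atTop (𝓝 L) := fun k hk => by
    have := (tendsto_one_div_atTop_nhds_zero_nat.mul_const (Real.log k)).add h
    rw [zero_mul, zero_add] at this
    refine this.congr fun n => ?_
    rw [Real.log_mul hk.ne' (ha n).ne', mul_add]
  refine tendsto_of_tendsto_of_tendsto_of_le_of_le (hscale c hc) (hscale C hC) (fun n => ?_)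
    (fun n => ?_)
  · exact mul_le_mul_of_nonneg_left (Real.log_le_log (mul_pos hc (ha n)) (hca n)) (by positivity)
  · exact mul_le_mul_of_nonneg_left (Real.log_le_log (hb n) (hbC n)) (by positivity)

theorem spectralRadius_eq_ofReal_of_isGreatest {𝕜 A : Type*} [NormedField 𝕜] [Ring A]
    [Algebra 𝕜 A] {a : A} {r : ℝ} (h : IsGreatest ((fun z : 𝕜 => ‖z‖) '' spectrum 𝕜 a) r) :
    spectralRadius 𝕜 a = ENNReal.ofReal r := by
  obtain ⟨⟨μ, hμ, rfl⟩, hub⟩ := h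
  refine le_antisymm (iSup₂_le fun k hk => ?_) (le_iSup₂_of_le μ hμ ?_)
  · rw [← enorm_eq_nnnorm, ← ofReal_norm]
    exact ENNReal.ofReal_le_ofReal (hub ⟨k, hk, rfl⟩)
  · rw [ofReal_norm, enorm_eq_nnnorm]

theorem IsUnit.tendsto_inv_mul_log_norm_pow {A : Type*} [NormedRing A] [NormedAlgebra ℂ A]
    [CompleteSpace A] [Nontrivial A] {a : A} (ha : IsUnit a) {r : ℝ}
    (h : IsGreatest ((fun z : ℂ => ‖z‖) '' spectrum ℂ a) r) :
    Tendsto (fun n : ℕ => 1 / (n : ℝ) * Real.log ‖a ^ n‖) atTop (𝓝 (Real.log r)) := by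
  have hr : 0 < r := by
    obtain ⟨μ, hμ, rfl⟩ := h.1
    exact norm_pos_iff.2 fun h0 => (spectrum.zero_notMem_iff ℂ).2 ha (h0 ▸ hμ)
  have hgelfand := spectrum.pow_norm_pow_one_div_tendsto_nhds_spectralRadius a
  rw [spectralRadius_eq_ofReal_of_isGreatest h] at hgelfand
  have hroot : Tendsto (fun n : ℕ => ‖a ^ n‖ ^ (1 / (n : ℝ))) atTop (𝓝 r) := by
    have := (ENNReal.tendsto_toReal ENNReal.ofReal_ne_top).comp hgelfand
    rw [ENNReal.toReal_ofReal hr.le] at this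
    exact this.congr fun n => ENNReal.toReal_ofReal (by positivity)
  refine ((Real.continuousAt_log hr.ne').tendsto.comp hroot).congr fun n => ?_
  exact Real.log_rpow (norm_pos_iff.2 (ha.pow n).ne_zero) _

def signatureMatrix (m : ℕ) : Matrix (Fin (m+1)) (Fin (m+1)) ℂ :=
  diagonal fun i => if i = Fin.last m then -1 else 1

theorem signatureMatrix_mul_self (m : ℕ) : signatureMatrix m * signatureMatrix m = 1 := by
  rw [signatureMatrix, diagonal_mul_diagonal, ← diagonal_one]
  congr 1
  ext i
  split_ifs <;> norm_num

theorem sum_mul_star_sub_eq_star_dotProduct {m : ℕ} (v w : Fin (m+1) → ℂ) :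
    (∑ i : Fin m, v i.castSucc * star (w i.castSucc)) - v (Fin.last m) * star (w (Fin.last m)) =
      star w ⬝ᵥ (signatureMatrix m *ᵥ v) := by
  simp only [signatureMatrix, dotProduct, mulVec_diagonal, Fin.sum_univ_castSucc,
    (Fin.castSucc_lt_last _).ne, if_true, if_false, Pi.star_apply]
  simp only [one_mul, neg_one_mul, mul_neg, mul_comm (v _)]
  ring

theorem inUmm1_iff {m : ℕ} {g : Matrix (Fin (m+1)) (Fin (m+1)) ℂ} :
    InUmm1 g ↔ gᴴ * signatureMatrix m * g = signatureMatrix m := by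
  have hform : ∀ v w, star (g *ᵥ w) ⬝ᵥ (signatureMatrix m *ᵥ (g *ᵥ v)) =
      star w ⬝ᵥ ((gᴴ * signatureMatrix m * g) *ᵥ v) := fun v w => by
    rw [star_mulVec, ← dotProduct_mulVec, mulVec_mulVec, mulVec_mulVec, Matrix.mul_assoc]
  simp only [InUmm1, sum_mul_star_sub_eq_star_dotProduct, hform]
  refine ⟨fun h => ext_of_mulVec_single fun j => funext fun i => ?_, fun h v w => by rw [h]⟩
  simpa using h (Pi.single j 1) (Pi.single i 1)

namespace InUmm1

variable {m : ℕ} {g h : Matrix (Fin (m+1)) (Fin (m+1)) ℂ}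

theorem mul (hg : InUmm1 g) (hh : InUmm1 h) : InUmm1 (g * h) := fun v w => by
  simp only [← mulVec_mulVec, hg (h *ᵥ v), hh v w]

theorem pow (hg : InUmm1 g) (n : ℕ) : InUmm1 (g ^ n) := by
  induction n with
  | zero => exact fun v w => by simp
  | succ n ih => rw [pow_succ]; exact ih.mul hg

theorem mul_signatureMatrix_conjTranspose_mul (hg : InUmm1 g) :
    g * (signatureMatrix m * gᴴ * signatureMatrix m) = 1 := by
  rw [mul_eq_one_comm, ← signatureMatrix_mul_self m]
  simp only [Matrix.mul_assoc, inUmm1_iff.1 hg]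

theorem isUnit (hg : InUmm1 g) : IsUnit g :=
  IsUnit.of_mul_eq_one _ hg.mul_signatureMatrix_conjTranspose_mul

theorem conjTranspose (hg : InUmm1 g) : InUmm1 gᴴ := by
  rw [inUmm1_iff, conjTranspose_conjTranspose]
  have := congrArg (· * signatureMatrix m) hg.mul_signatureMatrix_conjTranspose_mul
  simpa only [Matrix.mul_assoc, signatureMatrix_mul_self, Matrix.mul_one, Matrix.one_mul] using this

theorem sum_normSq_castSucc_apply (hg : InUmm1 g) (j : Fin (m+1)) :
    ∑ k : Fin m, Complex.normSq (g k.castSucc j) =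
      Complex.normSq (g (Fin.last m) j) + if j = Fin.last m then -1 else 1 := by
  have h := hg (Pi.single j 1) (Pi.single j 1)
  rw [sum_mul_star_sub_eq_star_dotProduct (Pi.single j 1)] at h
  simp only [mulVec_single_one, col_apply, Complex.star_def, Complex.mul_conj, Pi.star_single,
    star_one, signatureMatrix, single_dotProduct, one_mul, diagonal_apply_eq] at h
  apply Complex.ofReal_injective
  push_cast [apply_ite Complex.ofReal]
  linear_combination h

theorem sum_normSq_apply_castSucc (hg : InUmm1 g) (i : Fin (m+1)) :
    ∑ k : Fin m, Complex.normSq (g i k.castSucc) =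
      Complex.normSq (g i (Fin.last m)) + if i = Fin.last m then -1 else 1 := by
  simpa using hg.conjTranspose.sum_normSq_castSucc_apply i

theorem sum_normSq_castSucc_apply_last (hg : InUmm1 g) :
    ∑ k : Fin m, Complex.normSq (g k.castSucc (Fin.last m)) =
      Complex.normSq (g (Fin.last m) (Fin.last m)) - 1 := by
  simpa [sub_eq_add_neg] using hg.sum_normSq_castSucc_apply (Fin.last m)

theorem one_le_normSq_corner (hg : InUmm1 g) :
    1 ≤ Complex.normSq (g (Fin.last m) (Fin.last m)) := by
  have hnonneg : 0 ≤ ∑ k : Fin m, Complex.normSq (g k.castSucc (Fin.last m)) :=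
    Finset.sum_nonneg fun k _ => Complex.normSq_nonneg _
  linarith [hg.sum_normSq_castSucc_apply_last]

theorem sum_sum_normSq (hg : InUmm1 g) :
    ∑ i, ∑ j, Complex.normSq (g i j) =
      4 * Complex.normSq (g (Fin.last m) (Fin.last m)) + m - 3 := by
  have hcol : ∀ j, ∑ i, Complex.normSq (g i j) =
      2 * Complex.normSq (g (Fin.last m) j) + if j = Fin.last m then -1 else 1 := fun j => by
    rw [Fin.sum_univ_castSucc, hg.sum_normSq_castSucc_apply j]
    ring
  have hrow := hg.sum_normSq_apply_castSucc (Fin.last m)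
  rw [Finset.sum_comm, Finset.sum_congr rfl fun j _ => hcol j, Finset.sum_add_distrib,
    ← Finset.mul_sum, Fin.sum_univ_castSucc, Fin.sum_univ_castSucc (f := fun j => ite _ _ _), hrow]
  simp only [Fin.castSucc_ne_last, ↓reduceIte, Finset.sum_const, Finset.card_univ,
    Fintype.card_fin, nsmul_eq_mul, mul_one]
  ring

theorem norm_matAction_zero_sq (hg : InUmm1 g) :
    ‖matAction g 0‖ ^ 2 = 1 - (Complex.normSq (g (Fin.last m) (Fin.last m)))⁻¹ := by
  have hq := hg.one_le_normSq_corner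
  rw [EuclideanSpace.norm_sq_eq]
  simp only [matAction, PiLp.zero_apply, mul_zero, Finset.sum_const_zero, zero_add, norm_div,
    div_pow, Complex.sq_norm, ← Finset.sum_div, hg.sum_normSq_castSucc_apply_last]
  field_simp

theorem one_sub_norm_matAction_zero_bounds (hg : InUmm1 g) :
    2⁻¹ * (Complex.normSq (g (Fin.last m) (Fin.last m)))⁻¹ ≤ 1 - ‖matAction g 0‖ ∧
      1 - ‖matAction g 0‖ ≤ (Complex.normSq (g (Fin.last m) (Fin.last m)))⁻¹ := by
  have hsq := hg.norm_matAction_zero_sq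
  have hq : 0 < (Complex.normSq (g (Fin.last m) (Fin.last m)))⁻¹ :=
    inv_pos.2 (zero_lt_one.trans_le hg.one_le_normSq_corner)
  have ht : 0 ≤ ‖matAction g 0‖ := norm_nonneg _
  constructor <;> nlinarith

end InUmm1

section Frobenius

-- Gelfand's formula holds for any Banach algebra norm; the Frobenius norm is the one that the
-- form identities compute.
attribute [local instance] Matrix.frobeniusNormedRing Matrix.frobeniusNormedAlgebra

variable {m : ℕ} {g : Matrix (Fin (m+1)) (Fin (m+1)) ℂ}

theorem InUmm1.frobenius_norm_sq (hg : InUmm1 g) :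
    ‖g‖ ^ 2 = 4 * Complex.normSq (g (Fin.last m) (Fin.last m)) + m - 3 := by
  rw [frobenius_norm_def, ← Real.rpow_natCast, ← Real.rpow_mul (by positivity)]
  norm_num [Complex.sq_norm, hg.sum_sum_normSq]

theorem InUmm1.tendsto_inv_mul_log_normSq_corner_pow (hg : InUmm1 g) {lam : ℝ}
    (hlam : IsGreatest ((fun z : ℂ => ‖z‖) '' spectrum ℂ g) lam) :
    Tendsto (fun n : ℕ =>
        1 / (n : ℝ) * Real.log (Complex.normSq ((g ^ n) (Fin.last m) (Fin.last m))))
      atTop (𝓝 (2 * Real.log lam)) := by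
  have : CompleteSpace (Matrix (Fin (m+1)) (Fin (m+1)) ℂ) := FiniteDimensional.complete ℂ _
  have hgelfand := (hg.isUnit.tendsto_inv_mul_log_norm_pow hlam).const_mul 2
  have hq := fun n => (hg.pow n).one_le_normSq_corner
  refine tendsto_inv_mul_log_of_le_of_le (a := fun n => ‖g ^ n‖ ^ 2) (c := (m + 4 : ℝ)⁻¹)
    (C := 1) (by positivity) (fun n => pow_pos (norm_pos_iff.2 (hg.isUnit.pow n).ne_zero) 2)
    (fun n => ?_) (fun n => ?_) (hgelfand.congr fun n => ?_)
  · rw [(hg.pow n).frobenius_norm_sq, inv_mul_le_iff₀ (by positivity)]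
    nlinarith [hq n]
  · rw [(hg.pow n).frobenius_norm_sq]
    linarith [hq n]
  · rw [Real.log_pow]
    ring

end Frobenius

/-- If `g ∈ U(m,1)` and `λ₁(g)` is the spectral radius of `g`
(the largest absolute value of its eigenvalues), then
`lim_{n→∞} (1/n) log(1 − ‖gⁿ(0)‖) = −2 log λ₁(g)`. -/
theorem stmt5 {m : ℕ} (g : Matrix (Fin (m+1)) (Fin (m+1)) ℂ) (hg : InUmm1 g)
    (lam : ℝ) (hlam : IsGreatest ((fun z : ℂ => ‖z‖) '' spectrum ℂ g) lam) :
    Tendsto (fun n : ℕ => (1 / (n : ℝ)) * Real.log (1 - ‖matAction (g ^ n) 0‖)) atTop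
      (nhds (-2 * Real.log lam)) := by
  have hcorner := (hg.tendsto_inv_mul_log_normSq_corner_pow hlam).const_mul (-1)
  refine tendsto_inv_mul_log_of_le_of_le (c := 2⁻¹) (C := 1) (by norm_num)
    (fun n => inv_pos.2 (zero_lt_one.trans_le (hg.pow n).one_le_normSq_corner))
    (fun n => (hg.pow n).one_sub_norm_matAction_zero_bounds.1)
    (fun n => by simpa using (hg.pow n).one_sub_norm_matAction_zero_bounds.2) ?_
  convert hcorner using 2 with n
  · rw [Real.log_inv]
    ring
  · ring
end
end

section
/- Let Γ be a subgroup of Aut(B^m) ≅ PU(m,1) that is Zariski dense, meaning: any real polynomial on the space of (m+1)×(m+1) complex matrices that vanishes on the preimage of Γ in U(m,1) vanishes on all of U(m,1). If P : ℂ^m → ℝ is a real polynomial, z₀ ∈ ∂B^m, and P vanishes on the orbit Γ·z₀, then P vanishes on all of ∂B^m. -/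
open Matrix

noncomputable section

/-- A real polynomial on the space of `(m+1) × (m+1)` complex matrices: a polynomial in
the real and imaginary parts of the entries. -/
def IsRealPolyMat {m : ℕ} (P : Matrix (Fin (m+1)) (Fin (m+1)) ℂ → ℝ) : Prop :=
  ∃ Q : MvPolynomial ((Fin (m+1)) × (Fin (m+1)) × Bool) ℝ,
    ∀ X, P X = MvPolynomial.eval
      (fun p => if p.2.2 then (X p.1 p.2.1).re else (X p.1 p.2.1).im) Q

/-- A real polynomial on `ℂ^m`: a polynomial in the real and imaginary parts of the
coordinates. -/
def IsRealPolyVec {m : ℕ} (P : EuclideanSpace ℂ (Fin m) → ℝ) : Prop :=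
  ∃ Q : MvPolynomial (Fin m × Bool) ℝ,
    ∀ z, P z = MvPolynomial.eval (fun p => if p.2 then (z p.1).re else (z p.1).im) Q

/-! Clearing denominators: if `d(g)` is the last homogeneous coordinate of `g · (z₀, 1)`, then
`|d(g)|^(2n) · P(g · z₀)` is a real polynomial in the entries of `g` for some `n` (where `d(g) = 0`
the factor kills the junk value of the division). It vanishes on `G`, hence on `U(m,1)` by Zariski
density. Every `z ∈ ∂B^m` is `g · z₀` for a block matrix `g = diag(A, 1)` with `A` unitary, and
there `d(g) = 1`. -/

open MvPolynomial ComplexConjugate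

theorem MvPolynomial.aeval_pi_apply {R X ι : Type*} [CommSemiring R] (u : ι → X → R)
    (Q : MvPolynomial ι R) (x : X) : aeval u Q x = eval (fun i => u i x) Q := by
  change Pi.evalAlgHom R (fun _ => R) x (aeval u Q) = _
  rw [← AlgHom.comp_apply, comp_aeval]
  rfl

theorem Subalgebra.exists_pow_mul_aeval_mem {R A ι : Type*} [CommSemiring R] [CommSemiring A]
    [Algebra R A] (S : Subalgebra R A) {D : A} (hD : D ∈ S) {u : ι → A}
    (hu : ∀ i, D * u i ∈ S) (Q : MvPolynomial ι R) : ∃ n : ℕ, D ^ n * aeval u Q ∈ S := by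
  induction Q using MvPolynomial.induction_on with
  | C a => exact ⟨0, by simp⟩
  | add p q hp hq =>
    obtain ⟨n₁, hp⟩ := hp
    obtain ⟨n₂, hq⟩ := hq
    refine ⟨n₁ + n₂, ?_⟩
    have h : D ^ (n₁ + n₂) * aeval u (p + q) =
        D ^ n₂ * (D ^ n₁ * aeval u p) + D ^ n₁ * (D ^ n₂ * aeval u q) := by
      rw [map_add]; ring
    rw [h]
    exact add_mem (mul_mem (pow_mem hD _) hp) (mul_mem (pow_mem hD _) hq)
  | mul_X p i hp =>
    obtain ⟨n, hp⟩ := hp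
    refine ⟨n + 1, ?_⟩
    have h : D ^ (n + 1) * aeval u (p * X i) = (D ^ n * aeval u p) * (D * u i) := by
      rw [map_mul, aeval_X]; ring
    rw [h]
    exact mul_mem hp (hu i)

section ComplexValued

variable {X : Type*}

def complexValued (S : Subalgebra ℝ (X → ℝ)) : Subalgebra ℂ (X → ℂ) where
  carrier := {f | (fun x => (f x).re) ∈ S ∧ (fun x => (f x).im) ∈ S}
  mul_mem' hf hg :=
    ⟨sub_mem (mul_mem hf.1 hg.1) (mul_mem hf.2 hg.2), add_mem (mul_mem hf.1 hg.2) (mul_mem hf.2 hg.1)⟩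
  add_mem' hf hg := ⟨add_mem hf.1 hg.1, add_mem hf.2 hg.2⟩
  algebraMap_mem' c := ⟨S.algebraMap_mem c.re, S.algebraMap_mem c.im⟩

variable {S : Subalgebra ℝ (X → ℝ)} {f : X → ℂ}

theorem conj_mem_complexValued (hf : f ∈ complexValued S) :
    (fun x => conj (f x)) ∈ complexValued S :=
  ⟨hf.1, neg_mem hf.2⟩

theorem normSq_mem_of_mem_complexValued (hf : f ∈ complexValued S) :
    (fun x => Complex.normSq (f x)) ∈ S :=
  add_mem (mul_mem hf.1 hf.1) (mul_mem hf.2 hf.2)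

end ComplexValued

section RealPolynomials

variable {m : ℕ}

def matCoord (m : ℕ) (p : Fin (m+1) × Fin (m+1) × Bool)
    (g : Matrix (Fin (m+1)) (Fin (m+1)) ℂ) : ℝ :=
  if p.2.2 then (g p.1 p.2.1).re else (g p.1 p.2.1).im

abbrev realPolyMat (m : ℕ) : Subalgebra ℝ (Matrix (Fin (m+1)) (Fin (m+1)) ℂ → ℝ) :=
  (aeval (matCoord m)).range

theorem isRealPolyMat_of_mem {P : Matrix (Fin (m+1)) (Fin (m+1)) ℂ → ℝ}
    (hP : P ∈ realPolyMat m) : IsRealPolyMat P := by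
  obtain ⟨Q, rfl⟩ := hP
  exact ⟨Q, aeval_pi_apply _ Q⟩

theorem mulVec_apply_mem_complexValued (v : Fin (m+1) → ℂ) (i : Fin (m+1)) :
    (fun g : Matrix (Fin (m+1)) (Fin (m+1)) ℂ => (g *ᵥ v) i) ∈ complexValued (realPolyMat m) := by
  have hentry (j : Fin (m+1)) :
      (fun g : Matrix (Fin (m+1)) (Fin (m+1)) ℂ => g i j) ∈ complexValued (realPolyMat m) :=
    ⟨⟨X (i, j, true), by ext; simp [aeval_pi_apply, matCoord]⟩,
      ⟨X (i, j, false), by ext; simp [aeval_pi_apply, matCoord]⟩⟩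
  have h : (fun g : Matrix (Fin (m+1)) (Fin (m+1)) ℂ => (g *ᵥ v) i) =
      ∑ j, (fun g => g i j) * algebraMap ℂ _ (v j) := by
    ext g
    simp [mulVec, dotProduct]
  rw [h]
  exact sum_mem fun j _ => mul_mem (hentry j) (algebraMap_mem _ _)

end RealPolynomials

section Action

variable {m : ℕ}

abbrev homCoords (z : EuclideanSpace ℂ (Fin m)) : Fin (m+1) → ℂ := Fin.snoc z.ofLp 1

theorem matAction_apply (g : Matrix (Fin (m+1)) (Fin (m+1)) ℂ) (z : EuclideanSpace ℂ (Fin m))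
    (i : Fin m) :
    matAction g z i = (g *ᵥ homCoords z) i.castSucc / (g *ᵥ homCoords z) (Fin.last m) := by
  simp [matAction, mulVec, dotProduct, Fin.sum_univ_castSucc]

theorem Complex.normSq_mul_div (v w : ℂ) : (normSq w : ℂ) * (v / w) = v * conj w := by
  rcases eq_or_ne w 0 with rfl | hw
  · simp
  · rw [← Complex.mul_conj]
    field_simp

theorem exists_normSq_pow_mul_comp_matAction_mem {P : EuclideanSpace ℂ (Fin m) → ℝ}
    (hP : IsRealPolyVec P) (z₀ : EuclideanSpace ℂ (Fin m)) :
    ∃ n : ℕ, (fun g => Complex.normSq ((g *ᵥ homCoords z₀) (Fin.last m)) ^ n *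
      P (matAction g z₀)) ∈ realPolyMat m := by
  obtain ⟨Q, hQ⟩ := hP
  set d := fun g : Matrix (Fin (m+1)) (Fin (m+1)) ℂ => (g *ᵥ homCoords z₀) (Fin.last m)
  have hd : d ∈ complexValued (realPolyMat m) := mulVec_apply_mem_complexValued _ _
  let u : Fin m × Bool → Matrix (Fin (m+1)) (Fin (m+1)) ℂ → ℝ :=
    fun p g => if p.2 then (matAction g z₀ p.1).re else (matAction g z₀ p.1).im
  have hu (p : Fin m × Bool) : (fun g => Complex.normSq (d g)) * u p ∈ realPolyMat m := by
    obtain ⟨i, b⟩ := p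
    have hnum : (fun g => (g *ᵥ homCoords z₀) i.castSucc * conj (d g)) ∈
        complexValued (realPolyMat m) :=
      mul_mem (mulVec_apply_mem_complexValued _ _) (conj_mem_complexValued hd)
    have hcleared (g : Matrix (Fin (m+1)) (Fin (m+1)) ℂ) :
        (Complex.normSq (d g) : ℂ) * matAction g z₀ i =
          (g *ᵥ homCoords z₀) i.castSucc * conj (d g) := by
      rw [matAction_apply]
      exact Complex.normSq_mul_div _ _
    cases b
    · convert hnum.2 using 1
      ext g
      simp [u, ← hcleared]
    · convert hnum.1 using 1
      ext g
      simp [u, ← hcleared]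
  obtain ⟨n, hn⟩ :=
    (realPolyMat m).exists_pow_mul_aeval_mem (normSq_mem_of_mem_complexValued hd) hu Q
  refine ⟨n, ?_⟩
  convert hn using 1
  ext g
  simp [hQ, aeval_pi_apply, u, d]

end Action

section Transitivity

theorem exists_linearIsometryEquiv_apply_eq {𝕜 E : Type*} [RCLike 𝕜] [NormedAddCommGroup E]
    [InnerProductSpace 𝕜 E] [FiniteDimensional 𝕜 E] {x y : E} (hx : ‖x‖ = 1) (hy : ‖y‖ = 1) :
    ∃ f : E ≃ₗᵢ[𝕜] E, f x = y := by
  have : Nontrivial E := nontrivial_of_ne x 0 (norm_ne_zero_iff.1 (by simp [hx]))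
  let i₀ : Fin (Module.finrank 𝕜 E) := ⟨0, Module.finrank_pos⟩
  have basis_through {v : E} (hv : ‖v‖ = 1) :
      ∃ b : OrthonormalBasis (Fin (Module.finrank 𝕜 E)) 𝕜 E, b i₀ = v := by
    obtain ⟨b, hb⟩ := Orthonormal.exists_orthonormalBasis_extension_of_card_eq
      (Fintype.card_fin _).symm (v := fun _ => v) (s := {i₀})
      (orthonormal_subsingleton_iff.2 fun _ => hv)
    exact ⟨b, hb i₀ rfl⟩
  obtain ⟨b, rfl⟩ := basis_through hx
  obtain ⟨b', rfl⟩ := basis_through hy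
  exact ⟨b.repr.trans b'.repr.symm, by simp⟩

theorem LinearIsometryEquiv.dotProduct_star_map {𝕜 ι : Type*} [RCLike 𝕜] [Fintype ι]
    (f : EuclideanSpace 𝕜 ι ≃ₗᵢ[𝕜] EuclideanSpace 𝕜 ι) (x y : EuclideanSpace 𝕜 ι) :
    (f x).ofLp ⬝ᵥ star (f y).ofLp = x.ofLp ⬝ᵥ star y.ofLp := by
  simpa only [EuclideanSpace.inner_eq_star_dotProduct] using f.inner_map_map y x

variable {m : ℕ}

def blockDiagOne {R : Type*} [Zero R] [One R] (A : Matrix (Fin m) (Fin m) R) :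
    Matrix (Fin (m+1)) (Fin (m+1)) R :=
  Matrix.of (Fin.lastCases (Fin.snoc 0 1) fun i => Fin.snoc (A i) 0)

theorem blockDiagOne_mulVec {R : Type*} [Semiring R] (A : Matrix (Fin m) (Fin m) R)
    (v : Fin (m+1) → R) :
    blockDiagOne A *ᵥ v = Fin.snoc (A *ᵥ Fin.init v) (v (Fin.last m)) := by
  ext i
  induction i using Fin.lastCases <;>
    simp [blockDiagOne, mulVec, dotProduct, Fin.sum_univ_castSucc, Fin.init]

theorem exists_inUmm1_mulVec_homCoords_eq {z₀ z : EuclideanSpace ℂ (Fin m)} (hz₀ : ‖z₀‖ = 1)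
    (hz : ‖z‖ = 1) : ∃ g, InUmm1 g ∧ g *ᵥ homCoords z₀ = homCoords z := by
  obtain ⟨f, hf⟩ := exists_linearIsometryEquiv_apply_eq (𝕜 := ℂ) hz₀ hz
  set A := (Matrix.toLpLin 2 2).symm f.toLinearEquiv.toLinearMap
  have hA (v : Fin m → ℂ) : A *ᵥ v = (f (WithLp.toLp 2 v)).ofLp := by
    simpa [A] using congrArg WithLp.ofLp (Matrix.toLpLin_apply 2 2 A (WithLp.toLp 2 v)).symm
  refine ⟨blockDiagOne A, fun v w => ?_, ?_⟩
  · simp only [blockDiagOne_mulVec, Fin.snoc_castSucc, Fin.snoc_last]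
    congr 1
    change (A *ᵥ Fin.init v) ⬝ᵥ star (A *ᵥ Fin.init w) = Fin.init v ⬝ᵥ star (Fin.init w)
    rw [hA, hA]
    exact f.dotProduct_star_map _ _
  · rw [blockDiagOne_mulVec, hA]
    simp [homCoords, hf]

end Transitivity

theorem stmt9_general {m : ℕ} (G : Set (Matrix (Fin (m+1)) (Fin (m+1)) ℂ))
    (hZD : ∀ P : Matrix (Fin (m+1)) (Fin (m+1)) ℂ → ℝ, IsRealPolyMat P →
      (∀ g ∈ G, P g = 0) → ∀ g, InUmm1 g → P g = 0)
    (P : EuclideanSpace ℂ (Fin m) → ℝ) (hP : IsRealPolyVec P)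
    (z₀ : EuclideanSpace ℂ (Fin m)) (hz₀ : ‖z₀‖ = 1)
    (hvanish : ∀ g ∈ G, P (matAction g z₀) = 0) :
    ∀ z : EuclideanSpace ℂ (Fin m), ‖z‖ = 1 → P z = 0 := by
  intro z hz
  obtain ⟨n, hpoly⟩ := exists_normSq_pow_mul_comp_matAction_mem hP z₀
  obtain ⟨g, hgU, hgz⟩ := exists_inUmm1_mulVec_homCoords_eq hz₀ hz
  have hzero := hZD _ (isRealPolyMat_of_mem hpoly) (fun g hg => by simp [hvanish g hg]) g hgU
  have hmat : matAction g z₀ = z := by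
    ext i
    simp [matAction_apply, hgz]
  simpa [hgz, hmat] using hzero

/-- Let `G ⊆ U(m,1)` be the preimage of a Zariski dense subgroup
`Γ < PU(m,1)` (so `G` is a subgroup of `U(m,1)` closed under scaling by unit complex numbers),
where Zariski density means: any real polynomial on matrices vanishing on `G` vanishes on all
of `U(m,1)`. If `P : ℂ^m → ℝ` is a real polynomial, `z₀ ∈ ∂B^m`, and `P` vanishes on the
orbit `Γ·z₀`, then `P` vanishes on all of `∂B^m`. -/
theorem stmt9 {m : ℕ} (G : Set (Matrix (Fin (m+1)) (Fin (m+1)) ℂ))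
    (hGU : ∀ g ∈ G, InUmm1 g)
    (hone : (1 : Matrix (Fin (m+1)) (Fin (m+1)) ℂ) ∈ G)
    (hmul : ∀ g ∈ G, ∀ h ∈ G, g * h ∈ G)
    (hinv : ∀ g ∈ G, g⁻¹ ∈ G)
    (hscal : ∀ g ∈ G, ∀ u : ℂ, ‖u‖ = 1 → u • g ∈ G)
    (hZD : ∀ P : Matrix (Fin (m+1)) (Fin (m+1)) ℂ → ℝ, IsRealPolyMat P →
      (∀ g ∈ G, P g = 0) → ∀ g, InUmm1 g → P g = 0)
    (P : EuclideanSpace ℂ (Fin m) → ℝ) (hP : IsRealPolyVec P)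
    (z₀ : EuclideanSpace ℂ (Fin m)) (hz₀ : ‖z₀‖ = 1)
    (hvanish : ∀ g ∈ G, P (matAction g z₀) = 0) :
    ∀ z : EuclideanSpace ℂ (Fin m), ‖z‖ = 1 → P z = 0 :=
  stmt9_general G hZD P hP z₀ hz₀ hvanish

end
end

section
/- Let {g_n} ⊂ Aut(B^m) with g_n(0) → x ∈ ∂B^m and g_n⁻¹(0) → y ∈ ∂B^m. Then for every z in the closed ball with z ≠ y, g_n(z) → x, and the convergence is uniform on compact subsets of the closed ball minus {y}. -/
/-!
For an automorphism `f` of the ball with inverse `k` and `a = k 0`, the map `f ∘ φ_a` fixes `0`;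
Schwarz's lemma applied to it and to its inverse `φ_a ∘ k` shows that it preserves norms, and the
equality case of Schwarz's lemma on complex lines makes it a linear isometry. Since `φ_a` is
explicit, this gives, on the closed ball,
  `(1 - ⟪a, z⟫) (1 - ⟪f 0, f z⟫) = 1 - ‖a‖²`.
For `gₙ` with `aₙ = gₙ⁻¹ 0 → y ∈ ∂B`, the right side tends to `0` while the first factor stays
away from `0` uniformly on compact sets avoiding `y`. Hence `⟪gₙ 0, gₙ z⟫ → 1` uniformly there,
which inside the closed ball forces `‖gₙ z - gₙ 0‖ → 0`; and `gₙ 0 → x`.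
-/

open Metric Filter Set
open scoped InnerProductSpace ComplexConjugate Topology

noncomputable section

section Mobius

variable {E : Type*} [NormedAddCommGroup E] [InnerProductSpace ℂ E]

/-- Rudin's involution `φ_a` of the unit ball exchanging `0` and `a`:
`φ_a z = (a - P_a z - s Q_a z) / (1 - ⟪a, z⟫)` with `s = √(1 - ‖a‖²)`, `P_a` the orthogonal
projection onto `ℂ a` and `Q_a = 1 - P_a`. -/
def mobius (a z : E) : E :=
  (1 - ⟪a, z⟫_ℂ)⁻¹ •
    ((1 - (1 - (√(1 - ‖a‖ ^ 2) : ℂ)) * (⟪a, z⟫_ℂ / ⟪a, a⟫_ℂ)) • a - (√(1 - ‖a‖ ^ 2) : ℂ) • z)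

lemma inner_self_eq_ofReal_norm_sq (a : E) : ⟪a, a⟫_ℂ = (‖a‖ : ℂ) ^ 2 :=
  inner_self_eq_norm_sq_to_K a

lemma ofReal_sqrt_one_sub_sq {a : E} (ha : ‖a‖ ≤ 1) :
    (√(1 - ‖a‖ ^ 2) : ℂ) ^ 2 = 1 - ⟪a, a⟫_ℂ := by
  rw [← Complex.ofReal_pow, Real.sq_sqrt (by nlinarith [norm_nonneg a]),
    inner_self_eq_ofReal_norm_sq]
  push_cast
  ring

@[simp]
lemma mobius_zero (a : E) : mobius a 0 = a := by simp [mobius]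

@[simp]
lemma mobius_self (a : E) : mobius a a = 0 := by
  rcases eq_or_ne a 0 with rfl | ha
  · simp [mobius]
  have : ⟪a, a⟫_ℂ ≠ 0 := inner_self_ne_zero.mpr ha
  rw [mobius]
  match_scalars
  field_simp
  ring

lemma inner_ne_one_of_norm_lt_one {a z : E} (ha : ‖a‖ < 1) (hz : ‖z‖ ≤ 1) : ⟪a, z⟫_ℂ ≠ 1 := by
  intro h
  have := norm_inner_le_norm (𝕜 := ℂ) a z
  rw [h, norm_one] at this
  nlinarith [norm_nonneg a, norm_nonneg z]

lemma inner_mobius_right {a : E} (z : E) (hz : ⟪a, z⟫_ℂ ≠ 1) :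
    ⟪a, mobius a z⟫_ℂ = (⟪a, a⟫_ℂ - ⟪a, z⟫_ℂ) / (1 - ⟪a, z⟫_ℂ) := by
  rcases eq_or_ne a 0 with rfl | ha
  · simp
  have : ⟪a, a⟫_ℂ ≠ 0 := inner_self_ne_zero.mpr ha
  have : 1 - ⟪a, z⟫_ℂ ≠ 0 := sub_ne_zero.mpr hz.symm
  simp only [mobius, inner_smul_right, inner_sub_right]
  field_simp
  ring

lemma one_sub_inner_mobius_mobius {a : E} (ha : ‖a‖ ≤ 1) {z w : E} (hz : ⟪a, z⟫_ℂ ≠ 1)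
    (hw : ⟪a, w⟫_ℂ ≠ 1) :
    (1 - ⟪z, a⟫_ℂ) * (1 - ⟪a, w⟫_ℂ) * (1 - ⟪mobius a z, mobius a w⟫_ℂ)
      = (1 - ⟪a, a⟫_ℂ) * (1 - ⟪z, w⟫_ℂ) := by
  rcases eq_or_ne a 0 with rfl | ha0
  · simp [mobius]
  simp only [mobius, inner_smul_left, inner_smul_right, inner_sub_left, inner_sub_right,
    map_sub, map_one, map_mul, map_inv₀, map_div₀, Complex.conj_ofReal, inner_conj_symm]
  set s : ℂ := ((√(1 - ‖a‖ ^ 2) : ℝ) : ℂ)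
  have hA : ⟪a, a⟫_ℂ = 1 - s ^ 2 := by rw [ofReal_sqrt_one_sub_sq ha]; ring
  have hA0 : 1 - s ^ 2 ≠ 0 := hA ▸ inner_self_ne_zero.mpr ha0
  have hz' : 1 - ⟪z, a⟫_ℂ ≠ 0 := by
    rw [← inner_conj_symm, ← map_one (starRingEnd ℂ), ← map_sub]
    exact (map_ne_zero _).mpr (sub_ne_zero.mpr hz.symm)
  have hw' : 1 - ⟪a, w⟫_ℂ ≠ 0 := sub_ne_zero.mpr hw.symm
  rw [hA]
  field_simp
  ring

lemma mobius_mobius {a : E} (ha : ‖a‖ < 1) {z : E} (hz : ⟪a, z⟫_ℂ ≠ 1) :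
    mobius a (mobius a z) = z := by
  rcases eq_or_ne a 0 with rfl | ha0
  · simp [mobius]
  set s : ℂ := ((√(1 - ‖a‖ ^ 2) : ℝ) : ℂ)
  have hA : ⟪a, a⟫_ℂ = 1 - s ^ 2 := by rw [ofReal_sqrt_one_sub_sq ha.le]; ring
  have hA0 : 1 - s ^ 2 ≠ 0 := hA ▸ inner_self_ne_zero.mpr ha0
  have hs0 : s ≠ 0 := by
    have : 0 < 1 - ‖a‖ ^ 2 := by nlinarith [norm_nonneg a]
    exact Complex.ofReal_ne_zero.mpr (Real.sqrt_pos.mpr this).ne'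
  have hz' : 1 - ⟪a, z⟫_ℂ ≠ 0 := sub_ne_zero.mpr hz.symm
  have hφ : 1 - ⟪a, mobius a z⟫_ℂ = s ^ 2 / (1 - ⟪a, z⟫_ℂ) := by
    rw [inner_mobius_right z hz, hA]
    field_simp
    ring
  rw [mobius, hφ, inner_mobius_right z hz, mobius, hA]
  match_scalars <;> field_simp <;> ring

lemma norm_one_sub_inner_sq_mul {a : E} (ha : ‖a‖ ≤ 1) {z : E} (hz : ⟪a, z⟫_ℂ ≠ 1) :
    ‖1 - ⟪a, z⟫_ℂ‖ ^ 2 * (1 - ‖mobius a z‖ ^ 2) = (1 - ‖a‖ ^ 2) * (1 - ‖z‖ ^ 2) := by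
  have key := one_sub_inner_mobius_mobius ha hz hz
  have hconj : 1 - ⟪z, a⟫_ℂ = conj (1 - ⟪a, z⟫_ℂ) := by rw [map_sub, map_one, inner_conj_symm]
  rw [hconj, mul_comm (conj _), Complex.mul_conj', inner_self_eq_ofReal_norm_sq,
    inner_self_eq_ofReal_norm_sq, inner_self_eq_ofReal_norm_sq] at key
  exact_mod_cast key

lemma mobius_mapsTo_ball {a : E} (ha : ‖a‖ < 1) : MapsTo (mobius a) (ball 0 1) (ball 0 1) := by
  intro z hz
  rw [mem_ball_zero_iff] at hz ⊢
  have hza := inner_ne_one_of_norm_lt_one ha hz.le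
  have key := norm_one_sub_inner_sq_mul ha.le hza
  have h1 : 0 < ‖1 - ⟪a, z⟫_ℂ‖ ^ 2 := by
    have := sub_ne_zero.mpr hza.symm
    positivity
  have h2 : 0 < (1 - ‖a‖ ^ 2) * (1 - ‖z‖ ^ 2) := by
    apply mul_pos <;> nlinarith [norm_nonneg a, norm_nonneg z]
  have : 0 < 1 - ‖mobius a z‖ ^ 2 := pos_of_mul_pos_right (key ▸ h2) h1.le
  nlinarith [norm_nonneg (mobius a z)]

lemma differentiableOn_mobius {a : E} (ha : ‖a‖ < 1) :
    DifferentiableOn ℂ (mobius a) (ball 0 1) := by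
  have hinner : Differentiable ℂ (fun z : E => ⟪a, z⟫_ℂ) := (innerSL ℂ a).differentiable
  refine DifferentiableOn.smul ?_ (Differentiable.differentiableOn (by fun_prop))
  refine ((differentiable_const 1).sub hinner).differentiableOn.inv fun z hz => ?_
  exact sub_ne_zero.mpr (inner_ne_one_of_norm_lt_one ha (mem_ball_zero_iff.mp hz).le).symm

end Mobius

section Rigidity

variable {E F : Type*} [NormedAddCommGroup E] [NormedSpace ℂ E] [NormedAddCommGroup F]
  [NormedSpace ℂ F] [StrictConvexSpace ℝ F] {f : E → F}

lemma exists_eqOn_smul_of_norm_eq (hd : DifferentiableOn ℂ f (ball 0 1))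
    (hf : ∀ z ∈ ball (0 : E) 1, ‖f z‖ = ‖z‖) {ζ : E} (hζ : ‖ζ‖ = 1) :
    ∃ C : F, ‖C‖ = 1 ∧ EqOn (fun t : ℂ => f (t • ζ)) (fun t => t • C) (ball 0 1) := by
  have hmaps : MapsTo (fun t : ℂ => t • ζ) (ball 0 1) (ball 0 1) := fun t ht => by
    simpa [norm_smul, hζ] using ht
  have hG : ∀ t ∈ ball (0 : ℂ) 1, ‖f (t • ζ)‖ = ‖t‖ := fun t ht => by
    rw [hf _ (hmaps ht), norm_smul, hζ, mul_one]
  have hf0 : f 0 = 0 := norm_eq_zero.mp (by simpa using hf 0 (mem_ball_self one_pos))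
  have hhalf : (1 / 2 : ℂ) ∈ ball (0 : ℂ) 1 := by norm_num
  -- `‖dslope‖ = 1` is the equality case of Schwarz's lemma, which forces linearity on the line.
  obtain ⟨C, hC, hEq⟩ := Complex.affine_of_mapsTo_ball_of_exists_norm_dslope_eq_div'
    (R₁ := 1) (R₂ := 1) (c := 0) (hd.comp (by fun_prop) hmaps)
    (fun t ht => by
      rw [mem_closedBall, dist_eq_norm]
      simpa [hf0, hG t ht] using (mem_ball_zero_iff.mp ht).le)
    ⟨1 / 2, hhalf, by
      rw [dslope_of_ne _ (by norm_num), slope_def_module]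
      have := hG _ hhalf
      simp only [Function.comp_apply, zero_smul, hf0, sub_zero, norm_smul] at this ⊢
      norm_num [this]⟩
  exact ⟨C, by simpa using hC, fun t ht => by simpa [hf0] using hEq ht⟩

lemma exists_linearIsometry_eqOn_of_norm_eq (hd : DifferentiableOn ℂ f (ball 0 1))
    (hf : ∀ z ∈ ball (0 : E) 1, ‖f z‖ = ‖z‖) :
    ∃ L : E →ₗᵢ[ℂ] F, EqOn f L (ball 0 1) := by
  set L := fderiv ℂ f 0
  have hL : HasFDerivAt f L 0 := (hd.differentiableAt (ball_mem_nhds 0 one_pos)).hasFDerivAt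
  have hunit : ∀ ζ : E, ‖ζ‖ = 1 → ‖L ζ‖ = 1 ∧ ∀ t ∈ ball (0 : ℂ) 1, f (t • ζ) = t • L ζ := by
    intro ζ hζ
    obtain ⟨C, hC, hEq⟩ := exists_eqOn_smul_of_norm_eq hd hf hζ
    have hline : HasDerivAt (fun t : ℂ => f (t • ζ)) (L ζ) 0 := by
      have := (hasDerivAt_id (0 : ℂ)).smul_const ζ
      exact (zero_smul ℂ ζ ▸ hL).comp_hasDerivAt 0 (by simpa using this)
    have hCL : C = L ζ := by
      refine (HasDerivAt.unique ?_ hline)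
      have := ((hasDerivAt_id (0 : ℂ)).smul_const C).congr_of_eventuallyEq
        (hEq.eventuallyEq_of_mem (ball_mem_nhds 0 one_pos))
      simpa using this
    exact ⟨hCL ▸ hC, hCL ▸ hEq⟩
  have hpolar : ∀ v : E, v ≠ 0 →
      ‖(‖v‖ : ℂ)⁻¹ • v‖ = 1 ∧ (‖v‖ : ℂ) • (‖v‖ : ℂ)⁻¹ • v = v := fun v hv =>
    ⟨norm_smul_inv_norm hv, smul_inv_smul₀ (by simpa using hv) v⟩
  have hnorm : ∀ v, ‖L v‖ = ‖v‖ := by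
    intro v
    rcases eq_or_ne v 0 with rfl | hv
    · simp
    obtain ⟨hζ, hv'⟩ := hpolar v hv
    rw [← hv', map_smul, norm_smul, norm_smul, (hunit _ hζ).1, hζ]
  refine ⟨⟨L.toLinearMap, hnorm⟩, fun z hz => ?_⟩
  rcases eq_or_ne z 0 with rfl | hz0
  · simpa using hf 0 hz
  obtain ⟨hζ, hz'⟩ := hpolar z hz0
  calc f z = f ((‖z‖ : ℂ) • (‖z‖ : ℂ)⁻¹ • z) := by rw [hz']
    _ = (‖z‖ : ℂ) • L ((‖z‖ : ℂ)⁻¹ • z) := (hunit _ hζ).2 _ (by simpa using hz)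
    _ = L z := by rw [← map_smul, hz']

end Rigidity

section Automorphism

variable {E : Type*} [NormedAddCommGroup E] [InnerProductSpace ℂ E]

lemma norm_sub_sq_le_two_mul_norm_one_sub_inner {u v : E} (hu : ‖u‖ ≤ 1) (hv : ‖v‖ ≤ 1) :
    ‖u - v‖ ^ 2 ≤ 2 * ‖1 - ⟪u, v⟫_ℂ‖ := by
  have hre : RCLike.re (1 - ⟪u, v⟫_ℂ) ≤ ‖1 - ⟪u, v⟫_ℂ‖ := RCLike.re_le_norm _
  rw [map_sub, RCLike.one_re] at hre
  rw [norm_sub_sq (𝕜 := ℂ)]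
  nlinarith [norm_nonneg u, norm_nonneg v]

structure IsBallBiholomorphism (f k : E → E) : Prop where
  differentiableOn : DifferentiableOn ℂ f (ball 0 1)
  differentiableOn_inv : DifferentiableOn ℂ k (ball 0 1)
  mapsTo : MapsTo f (ball 0 1) (ball 0 1)
  mapsTo_inv : MapsTo k (ball 0 1) (ball 0 1)
  invOn : InvOn k f (ball 0 1) (ball 0 1)

namespace IsBallBiholomorphism

variable {f k : E → E}

lemma norm_inv_zero_lt_one (hf : IsBallBiholomorphism f k) : ‖k 0‖ < 1 :=
  mem_ball_zero_iff.mp (hf.mapsTo_inv (mem_ball_self one_pos))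

lemma norm_map_mobius (hf : IsBallBiholomorphism f k) {u : E} (hu : u ∈ ball 0 1) :
    ‖f (mobius (k 0) u)‖ = ‖u‖ := by
  have ha := hf.norm_inv_zero_lt_one
  have hφd := differentiableOn_mobius ha
  have hφm := mobius_mapsTo_ball ha
  have h0 : (0 : E) ∈ ball 0 1 := mem_ball_self one_pos
  apply le_antisymm
  · refine Complex.norm_le_norm_of_mapsTo_ball (hf.differentiableOn.comp hφd hφm)
      ((hf.mapsTo.comp hφm).mono_right ball_subset_closedBall) ?_ (mem_ball_zero_iff.mp hu)
    simp [hf.invOn.2 h0]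
  · have hback : mobius (k 0) (k (f (mobius (k 0) u))) = u := by
      rw [hf.invOn.1 (hφm hu), mobius_mobius ha
        (inner_ne_one_of_norm_lt_one ha (mem_ball_zero_iff.mp hu).le)]
    conv_lhs => rw [← hback]
    exact Complex.norm_le_norm_of_mapsTo_ball (hφd.comp hf.differentiableOn_inv hf.mapsTo_inv)
      ((hφm.comp hf.mapsTo_inv).mono_right ball_subset_closedBall) (by simp)
      (mem_ball_zero_iff.mp (hf.mapsTo (hφm hu)))

lemma one_sub_inner_mul_one_sub_inner_of_mem_ball (hf : IsBallBiholomorphism f k) {z : E}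
    (hz : z ∈ ball 0 1) :
    (1 - ⟪k 0, z⟫_ℂ) * (1 - ⟪f 0, f z⟫_ℂ) = 1 - ⟪k 0, k 0⟫_ℂ := by
  have ha := hf.norm_inv_zero_lt_one
  have hφm := mobius_mapsTo_ball ha
  have : StrictConvexSpace ℝ E :=
    letI : InnerProductSpace ℝ E := InnerProductSpace.rclikeToReal ℂ E
    inferInstance
  obtain ⟨L, hL⟩ := exists_linearIsometry_eqOn_of_norm_eq
    (hf.differentiableOn.comp (differentiableOn_mobius ha) hφm)
    fun u hu => hf.norm_map_mobius hu
  have hza := inner_ne_one_of_norm_lt_one ha (mem_ball_zero_iff.mp hz).le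
  have hinner : ⟪f 0, f z⟫_ℂ = ⟪k 0, mobius (k 0) z⟫_ℂ := by
    have := L.inner_map_map (k 0) (mobius (k 0) z)
    rwa [← hL (hf.mapsTo_inv (mem_ball_self one_pos)), ← hL (hφm hz), Function.comp_apply,
      Function.comp_apply, mobius_self, mobius_mobius ha hza] at this
  rw [hinner, inner_mobius_right z hza]
  have : 1 - ⟪k 0, z⟫_ℂ ≠ 0 := sub_ne_zero.mpr hza.symm
  field_simp
  ring

lemma one_sub_inner_mul_one_sub_inner (hf : IsBallBiholomorphism f k)
    (hfc : ContinuousOn f (closedBall 0 1)) {z : E} (hz : z ∈ closedBall 0 1) :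
    (1 - ⟪k 0, z⟫_ℂ) * (1 - ⟪f 0, f z⟫_ℂ) = 1 - ⟪k 0, k 0⟫_ℂ := by
  refine EqOn.of_subset_closure (f := fun z => (1 - ⟪k 0, z⟫_ℂ) * (1 - ⟪f 0, f z⟫_ℂ))
    (fun z hz => hf.one_sub_inner_mul_one_sub_inner_of_mem_ball hz) ?_ continuousOn_const
    ball_subset_closedBall (closure_ball 0 one_ne_zero).ge hz
  fun_prop

lemma norm_map_zero_sub_sq_le (hf : IsBallBiholomorphism f k)
    (hfc : ContinuousOn f (closedBall 0 1)) (hfcb : MapsTo f (closedBall 0 1) (closedBall 0 1))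
    {z : E} (hz : z ∈ closedBall 0 1) {r : ℝ} (hr : 0 < r) (hrz : r ≤ ‖1 - ⟪k 0, z⟫_ℂ‖) :
    ‖f 0 - f z‖ ^ 2 ≤ 2 * (1 - ‖k 0‖ ^ 2) / r := by
  have hid : ‖1 - ⟪k 0, z⟫_ℂ‖ * ‖1 - ⟪f 0, f z⟫_ℂ‖ = 1 - ‖k 0‖ ^ 2 := by
    have hk : (0 : ℝ) ≤ 1 - ‖k 0‖ ^ 2 := by nlinarith [hf.norm_inv_zero_lt_one, norm_nonneg (k 0)]
    rw [← norm_mul, hf.one_sub_inner_mul_one_sub_inner hfc hz, inner_self_eq_ofReal_norm_sq,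
      ← Complex.norm_of_nonneg hk]
    push_cast
    rfl
  calc ‖f 0 - f z‖ ^ 2 ≤ 2 * ‖1 - ⟪f 0, f z⟫_ℂ‖ :=
        norm_sub_sq_le_two_mul_norm_one_sub_inner
          (mem_closedBall_zero_iff.mp (hfcb (mem_closedBall_self zero_le_one)))
          (mem_closedBall_zero_iff.mp (hfcb hz))
    _ ≤ 2 * ((1 - ‖k 0‖ ^ 2) / r) := by
        refine mul_le_mul_of_nonneg_left ?_ zero_le_two
        rw [le_div_iff₀ hr, ← hid, mul_comm]
        gcongr
    _ = 2 * (1 - ‖k 0‖ ^ 2) / r := by ring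

end IsBallBiholomorphism

end Automorphism

section NorthSouth

variable {E : Type*} [NormedAddCommGroup E] [InnerProductSpace ℂ E]

lemma exists_pos_le_norm_one_sub_inner {y : E} (hy : ‖y‖ = 1) {K : Set E} (hK : IsCompact K)
    (hKy : K ⊆ closedBall 0 1 \ {y}) : ∃ c > 0, ∀ z ∈ K, c ≤ ‖1 - ⟪y, z⟫_ℂ‖ := by
  refine hK.exists_forall_le' (by fun_prop) fun z hz => norm_pos_iff.mpr ?_
  obtain ⟨hz1, hzy⟩ := hKy hz
  rw [mem_closedBall_zero_iff] at hz1
  intro h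
  have hinner : ⟪y, z⟫_ℂ = 1 := (sub_eq_zero.mp h).symm
  have hz : ‖z‖ = 1 := by
    have := norm_inner_le_norm (𝕜 := ℂ) y z
    rw [hinner, hy, norm_one, one_mul] at this
    exact le_antisymm hz1 this
  exact hzy ((inner_eq_one_iff_of_norm_eq_one hy hz).mp hinner).symm

theorem tendstoUniformlyOn_of_isBallBiholomorphism {g h : ℕ → E → E}
    (hg : ∀ n, IsBallBiholomorphism (g n) (h n)) (hgc : ∀ n, ContinuousOn (g n) (closedBall 0 1))
    (hgcb : ∀ n, MapsTo (g n) (closedBall 0 1) (closedBall 0 1)) {x y : E} (hy : ‖y‖ = 1)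
    (hgx : Tendsto (fun n => g n 0) atTop (𝓝 x)) (hhy : Tendsto (fun n => h n 0) atTop (𝓝 y))
    {K : Set E} (hK : IsCompact K) (hKy : K ⊆ closedBall 0 1 \ {y}) :
    TendstoUniformlyOn g (fun _ => x) atTop K := by
  obtain ⟨c, hc, hcK⟩ := exists_pos_le_norm_one_sub_inner hy hK hKy
  have hbound : Tendsto (fun n => dist (g n 0) x + √(2 * (1 - ‖h n 0‖ ^ 2) / (c / 2)))
      atTop (𝓝 0) := by
    have h1 : Tendsto (fun n => 1 - ‖h n 0‖ ^ 2) atTop (𝓝 0) := by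
      simpa [hy] using (tendsto_const_nhds (x := (1 : ℝ))).sub (hhy.norm.pow 2)
    simpa using
      (hgx.dist (tendsto_const_nhds (x := x))).add ((h1.const_mul 2).div_const (c / 2)).sqrt
  have hclose : ∀ᶠ n in atTop, ‖h n 0 - y‖ < c / 2 := by
    simpa [dist_eq_norm] using hhy.eventually (ball_mem_nhds y (half_pos hc))
  rw [Metric.tendstoUniformlyOn_iff]
  intro ε hε
  filter_upwards [hclose, hbound.eventually (gt_mem_nhds hε)] with n hn hεn z hz
  have hz1 := (hKy hz).1
  have hr : c / 2 ≤ ‖1 - ⟪h n 0, z⟫_ℂ‖ := by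
    have hyz : ‖⟪h n 0 - y, z⟫_ℂ‖ ≤ ‖h n 0 - y‖ :=
      (norm_inner_le_norm _ _).trans
        (mul_le_of_le_one_right (norm_nonneg _) (mem_closedBall_zero_iff.mp hz1))
    have htri := norm_sub_norm_le (1 - ⟪y, z⟫_ℂ) ⟪h n 0 - y, z⟫_ℂ
    rw [inner_sub_left] at hyz htri
    rw [sub_sub_sub_cancel_right] at htri
    linarith [hcK z hz]
  have hsq := (hg n).norm_map_zero_sub_sq_le (hgc n) (hgcb n) hz1 (half_pos hc) hr
  calc dist x (g n z) ≤ dist (g n 0) x + dist (g n 0) (g n z) := dist_triangle_left _ _ _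
    _ ≤ dist (g n 0) x + √(2 * (1 - ‖h n 0‖ ^ 2) / (c / 2)) := by
        rw [dist_eq_norm (g n 0) (g n z)]
        gcongr
        exact (le_abs_self _).trans (Real.abs_le_sqrt hsq)
    _ < ε := hεn

end NorthSouth

theorem stmt11_general {m : ℕ}
    (g h : ℕ → EuclideanSpace ℂ (Fin m) → EuclideanSpace ℂ (Fin m))
    (hgol : ∀ n, DifferentiableOn ℂ (g n) (ball 0 1))
    (hhol : ∀ n, DifferentiableOn ℂ (h n) (ball 0 1))
    (hgball : ∀ n, MapsTo (g n) (ball (0 : EuclideanSpace ℂ (Fin m)) 1) (ball 0 1))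
    (hhball : ∀ n, MapsTo (h n) (ball (0 : EuclideanSpace ℂ (Fin m)) 1) (ball 0 1))
    (hgcb : ∀ n, MapsTo (g n) (closedBall (0 : EuclideanSpace ℂ (Fin m)) 1) (closedBall 0 1))
    (hgcont : ∀ n, ContinuousOn (g n) (closedBall 0 1))
    (hinv : ∀ n, ∀ z ∈ closedBall (0 : EuclideanSpace ℂ (Fin m)) 1,
      h n (g n z) = z ∧ g n (h n z) = z)
    (x y : EuclideanSpace ℂ (Fin m)) (hy : ‖y‖ = 1)
    (hgx : Tendsto (fun n => g n 0) atTop (nhds x))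
    (hhy : Tendsto (fun n => h n 0) atTop (nhds y)) :
    (∀ z ∈ closedBall (0 : EuclideanSpace ℂ (Fin m)) 1, z ≠ y →
      Tendsto (fun n => g n z) atTop (nhds x)) ∧
    (∀ K ⊆ closedBall (0 : EuclideanSpace ℂ (Fin m)) 1 \ {y}, IsCompact K →
      TendstoUniformlyOn (fun n z => g n z) (fun _ => x) atTop K) := by
  have hbihol n : IsBallBiholomorphism (g n) (h n) :=
    ⟨hgol n, hhol n, hgball n, hhball n, fun z hz => (hinv n z (ball_subset_closedBall hz)).1,
      fun z hz => (hinv n z (ball_subset_closedBall hz)).2⟩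
  have hunif : ∀ K ⊆ closedBall (0 : EuclideanSpace ℂ (Fin m)) 1 \ {y}, IsCompact K →
      TendstoUniformlyOn g (fun _ => x) atTop K := fun K hKy hK =>
    tendstoUniformlyOn_of_isBallBiholomorphism hbihol hgcont hgcb hy hgx hhy hK hKy
  refine ⟨fun z hz hzy => ?_, hunif⟩
  exact (hunif {z} (singleton_subset_iff.mpr ⟨hz, hzy⟩) isCompact_singleton).tendsto_at rfl

/-- **North–South dynamics.** Let `gₙ` be automorphisms of the unit ball
(biholomorphisms of the open ball, with inverses `hₙ`, extending continuously to the closed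
ball), with `gₙ(0) → x ∈ ∂B^m` and `gₙ⁻¹(0) → y ∈ ∂B^m`. Then `gₙ(z) → x` for every `z` in
the closed ball with `z ≠ y`, uniformly on compact subsets of the closed ball minus `{y}`. -/
theorem stmt11 {m : ℕ}
    (g h : ℕ → EuclideanSpace ℂ (Fin m) → EuclideanSpace ℂ (Fin m))
    (hgol : ∀ n, DifferentiableOn ℂ (g n) (ball 0 1))
    (hhol : ∀ n, DifferentiableOn ℂ (h n) (ball 0 1))
    (hgball : ∀ n, MapsTo (g n) (ball (0 : EuclideanSpace ℂ (Fin m)) 1) (ball 0 1))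
    (hhball : ∀ n, MapsTo (h n) (ball (0 : EuclideanSpace ℂ (Fin m)) 1) (ball 0 1))
    (hgcb : ∀ n, MapsTo (g n) (closedBall (0 : EuclideanSpace ℂ (Fin m)) 1) (closedBall 0 1))
    (hhcb : ∀ n, MapsTo (h n) (closedBall (0 : EuclideanSpace ℂ (Fin m)) 1) (closedBall 0 1))
    (hgcont : ∀ n, ContinuousOn (g n) (closedBall 0 1))
    (hhcont : ∀ n, ContinuousOn (h n) (closedBall 0 1))
    (hinv : ∀ n, ∀ z ∈ closedBall (0 : EuclideanSpace ℂ (Fin m)) 1,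
      h n (g n z) = z ∧ g n (h n z) = z)
    (x y : EuclideanSpace ℂ (Fin m)) (hx : ‖x‖ = 1) (hy : ‖y‖ = 1)
    (hgx : Tendsto (fun n => g n 0) atTop (nhds x))
    (hhy : Tendsto (fun n => h n 0) atTop (nhds y)) :
    (∀ z ∈ closedBall (0 : EuclideanSpace ℂ (Fin m)) 1, z ≠ y →
      Tendsto (fun n => g n z) atTop (nhds x)) ∧
    (∀ K ⊆ closedBall (0 : EuclideanSpace ℂ (Fin m)) 1 \ {y}, IsCompact K →
      TendstoUniformlyOn (fun n z => g n z) (fun _ => x) atTop K) :=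
  stmt11_general g h hgol hhol hgball hhball hgcb hgcont hinv x y hy hgx hhy
end
end
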